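/- arXiv:1708.06800 — 6 statements merged into one kernel-verified Lean document; each statement's English description precedes it below -/
import Mathlib

section
/- Let a_1 > a_2 > ... > a_N > 0 be real numbers and let x = (x_1,...,x_N) be a point with all x_k nonzero. Then the equation sum_{k=1}^N x_k^2/(a_k + λ) = 1, after clearing denominators, is a polynomial equation of degree N in λ having N real roots u_1,...,u_N satisfying -a_1 < u_1 < -a_2 < u_2 < ... < -a_N < u_N. -/
open Finset Polynomial

/-- for `a 0 > a 1 > ... > a (N-1) > 0` and a point `x` with all coordinates
nonzero, the equation `∑ k, x k ^ 2 / (a k + λ) = 1`, after clearing denominators, is a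
polynomial equation of degree `N` in `λ` with `N` real roots `u 0, ..., u (N-1)` satisfying
`-a 0 < u 0 < -a 1 < u 1 < ... < -a (N-1) < u (N-1)`. -/
theorem confocal_roots_exist (N : ℕ) (hN : 0 < N) (a : Fin N → ℝ) (ha : StrictAnti a)
    (hapos : ∀ i, 0 < a i) (x : Fin N → ℝ) (hx : ∀ k, x k ≠ 0) :
    ∃ p : Polynomial ℝ,
      p = (∏ m : Fin N, (Polynomial.X + Polynomial.C (a m))) -
          ∑ k : Fin N, Polynomial.C ((x k) ^ 2) *
            ∏ m ∈ Finset.univ.erase k, (Polynomial.X + Polynomial.C (a m)) ∧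
      p.natDegree = N ∧
      ∃ u : Fin N → ℝ,
        (∀ i : Fin N, -a i < u i) ∧
        (∀ i : Fin N, ∀ h : (i : ℕ) + 1 < N, u i < -a ⟨(i : ℕ) + 1, h⟩) ∧
        ∀ i : Fin N, (∑ k : Fin N, (x k) ^ 2 / (a k + u i)) = 1 ∧ p.IsRoot (u i) := by
  classical
  set P : Polynomial ℝ := (∏ m : Fin N, (Polynomial.X + Polynomial.C (a m))) with hPdef
  set Q : Polynomial ℝ := ∑ k : Fin N, Polynomial.C ((x k) ^ 2) *
      ∏ m ∈ Finset.univ.erase k, (Polynomial.X + Polynomial.C (a m)) with hQdef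
  set p : Polynomial ℝ := P - Q with hp
  -- degrees
  have hPdeg : P.natDegree = N := by
    rw [hPdef, Polynomial.natDegree_prod _ _ (fun m _ => Polynomial.X_add_C_ne_zero (a m))]
    simp [Polynomial.natDegree_X_add_C]
  have hPmonic : P.Monic := by
    apply Polynomial.monic_prod_of_monic
    intro m _
    exact Polynomial.monic_X_add_C (a m)
  have hQdeg : Q.natDegree < N := by
    have h1 : Q.natDegree ≤ N - 1 := by
      apply Polynomial.natDegree_sum_le_of_forall_le
      intro k _
      refine le_trans (Polynomial.natDegree_C_mul_le _ _) ?_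
      refine le_trans (Polynomial.natDegree_prod_le _ _) ?_
      have : ∀ m ∈ Finset.univ.erase k, (Polynomial.X + Polynomial.C (a m)).natDegree = 1 := by
        intro m _; exact Polynomial.natDegree_X_add_C (a m)
      rw [Finset.sum_congr rfl this]
      simp [Finset.card_erase_of_mem]
    omega
  have hpdeg : p.natDegree = N := by
    rw [hp, Polynomial.natDegree_sub_eq_left_of_natDegree_lt (hPdeg ▸ hQdeg), hPdeg]
  have hpmonic : p.Monic := by
    apply hPmonic.sub_of_left
    rw [Polynomial.degree_eq_natDegree hPmonic.ne_zero, hPdeg]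
    calc Q.degree ≤ (Q.natDegree : WithBot ℕ) := Polynomial.degree_le_natDegree
    _ < (N : WithBot ℕ) := by exact_mod_cast hQdeg
  -- evaluation
  have hev : ∀ t : ℝ, p.eval t =
      (∏ m : Fin N, (t + a m)) - ∑ k : Fin N, (x k) ^ 2 * ∏ m ∈ Finset.univ.erase k, (t + a m) := by
    intro t
    simp [hp, hPdef, hQdef, Polynomial.eval_prod, Polynomial.eval_finset_sum]
  -- value at -a i
  set s : Fin N → ℝ := fun i => ∏ m ∈ Finset.univ.erase i, (a m - a i) with hs
  have hPs : ∀ i : Fin N, p.eval (-a i) = -((x i) ^ 2 * s i) := by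
    intro i
    rw [hev]
    have h1 : (∏ m : Fin N, (-a i + a m)) = 0 :=
      Finset.prod_eq_zero (Finset.mem_univ i) (by ring)
    have h2 : ∀ k ∈ Finset.univ, k ≠ i →
        (x k) ^ 2 * ∏ m ∈ Finset.univ.erase k, (-a i + a m) = 0 := by
      intro k _ hk
      have : (∏ m ∈ Finset.univ.erase k, (-a i + a m)) = 0 :=
        Finset.prod_eq_zero (Finset.mem_erase.2 ⟨Ne.symm hk, Finset.mem_univ i⟩) (by ring)
      rw [this, mul_zero]
    rw [h1, Finset.sum_eq_single i h2 (by simp), hs]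
    have : (∏ m ∈ Finset.univ.erase i, (-a i + a m)) =
        ∏ m ∈ Finset.univ.erase i, (a m - a i) :=
      Finset.prod_congr rfl (fun m _ => by ring)
    rw [this]; ring
  -- sign alternation: consecutive s have opposite signs
  have hss : ∀ i : Fin N, ∀ h : (i : ℕ) + 1 < N, s i * s ⟨(i : ℕ) + 1, h⟩ < 0 := by
    intro i h
    set j : Fin N := ⟨(i : ℕ) + 1, h⟩ with hj
    have hij : i < j := by simp [hj, Fin.lt_def]
    have hijne : i ≠ j := ne_of_lt hij
    set S : Finset (Fin N) := (Finset.univ.erase i).erase j with hS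
    have hjmem : j ∈ Finset.univ.erase i := Finset.mem_erase.2 ⟨(Ne.symm hijne), Finset.mem_univ j⟩
    have himem : i ∈ Finset.univ.erase j := Finset.mem_erase.2 ⟨hijne, Finset.mem_univ i⟩
    have e1 : s i = (a j - a i) * ∏ m ∈ S, (a m - a i) := by
      show (∏ m ∈ Finset.univ.erase i, (a m - a i)) = _
      rw [hS, ← Finset.mul_prod_erase _ _ hjmem]
    have e2 : s j = (a i - a j) * ∏ m ∈ S, (a m - a j) := by
      show (∏ m ∈ Finset.univ.erase j, (a m - a j)) = _
      rw [hS, Finset.erase_right_comm, ← Finset.mul_prod_erase _ _ himem]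
    have haij : a j < a i := ha hij
    have hpos : 0 < ∏ m ∈ S, ((a m - a i) * (a m - a j)) := by
      apply Finset.prod_pos
      intro m hm
      have hmj : m ≠ j := (Finset.mem_erase.1 hm).1
      have hmi : m ≠ i := (Finset.mem_erase.1 (Finset.mem_erase.1 hm).2).1
      rcases lt_or_gt_of_ne hmi with hlt | hgt
      · have h1 : a i < a m := ha hlt
        have h2 : a j < a m := lt_trans haij h1
        exact mul_pos (by linarith) (by linarith)
      · have hmgtj : j < m := by
          have h1 : (i : ℕ) < (m : ℕ) := hgt
          have h2 : (m : ℕ) ≠ (i : ℕ) + 1 := fun hc => hmj (Fin.ext hc)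
          exact Fin.lt_def.mpr (by simp [hj]; omega)
        have h1 : a m < a j := ha hmgtj
        have h2 : a m < a i := lt_trans h1 haij
        exact mul_pos_of_neg_of_neg (by linarith) (by linarith)
    have : s i * s j = ((a j - a i) * (a i - a j)) * ∏ m ∈ S, ((a m - a i) * (a m - a j)) := by
      rw [e1, e2, Finset.prod_mul_distrib]; ring
    rw [this]
    apply mul_neg_of_neg_of_pos _ hpos
    nlinarith
  have hcont : Continuous fun t : ℝ => p.eval t := p.continuous
  -- a point far right where p is positive
  have htend : Filter.Tendsto (fun t : ℝ => p.eval t) Filter.atTop Filter.atTop := by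
    apply Polynomial.tendsto_atTop_of_leadingCoeff_nonneg
    · rw [Polynomial.degree_eq_natDegree hpmonic.ne_zero, hpdeg]
      exact_mod_cast hN
    · rw [hpmonic.leadingCoeff]; norm_num
  obtain ⟨b, hb⟩ := ((htend.eventually_gt_atTop 0).and (Filter.eventually_ge_atTop 0)).exists
  obtain ⟨hbpos, hbnn⟩ := hb
  -- existence of roots in each interval
  have key : ∀ i : Fin N, ∃ u : ℝ, -a i < u ∧
      (∀ h : (i : ℕ) + 1 < N, u < -a ⟨(i : ℕ) + 1, h⟩) ∧ p.eval u = 0 := by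
    intro i
    by_cases h : (i : ℕ) + 1 < N
    · set j : Fin N := ⟨(i : ℕ) + 1, h⟩ with hj
      have hij : i < j := by simp [hj, Fin.lt_def]
      have hab : -a i < -a j := by have := ha hij; linarith
      have hsgn : p.eval (-a i) * p.eval (-a j) < 0 := by
        rw [hPs i, hPs j]
        have h1 : 0 < (x i) ^ 2 := pow_two_pos_of_ne_zero (hx i)
        have h2 : 0 < (x j) ^ 2 := pow_two_pos_of_ne_zero (hx j)
        have h3 : s i * s j < 0 := hss i h
        nlinarith [mul_pos h1 h2]
      have hle := le_of_lt hab
      rcases lt_or_ge (p.eval (-a i)) 0 with hA | hA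
      · have hB : 0 < p.eval (-a j) := by
          rcases lt_trichotomy (p.eval (-a j)) 0 with h' | h' | h'
          · nlinarith
          · nlinarith
          · exact h'
        obtain ⟨u, hu, hfu⟩ := intermediate_value_Ioo hle hcont.continuousOn
          (Set.mem_Ioo.2 ⟨hA, hB⟩)
        exact ⟨u, hu.1, fun h' => hu.2, hfu⟩
      · have hA' : 0 < p.eval (-a i) := by
          rcases eq_or_lt_of_le hA with h' | h'
          · exfalso; rw [← h'] at hsgn; simp at hsgn
          · exact h'
        have hB : p.eval (-a j) < 0 := by nlinarith
        obtain ⟨u, hu, hfu⟩ := intermediate_value_Ioo' hle hcont.continuousOn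
          (Set.mem_Ioo.2 ⟨hB, hA'⟩)
        exact ⟨u, hu.1, fun h' => hu.2, hfu⟩
    · -- i is the last index
      have hspos : 0 < s i := by
        rw [hs]
        apply Finset.prod_pos
        intro m hm
        have hmi : m ≠ i := (Finset.mem_erase.1 hm).1
        have hmlt : m < i := by
          rcases lt_or_gt_of_ne hmi with h' | h'
          · exact h'
          · exfalso
            have h1 : (i : ℕ) < (m : ℕ) := h'
            have := m.isLt; omega
        have := ha hmlt
        linarith
      have hA : p.eval (-a i) < 0 := by
        rw [hPs i]
        have h1 : 0 < (x i) ^ 2 := pow_two_pos_of_ne_zero (hx i)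
        nlinarith
      have hab : -a i < b := lt_of_lt_of_le (by have := hapos i; linarith) hbnn
      obtain ⟨u, hu, hfu⟩ := intermediate_value_Ioo (le_of_lt hab) hcont.continuousOn
        (Set.mem_Ioo.2 ⟨hA, hbpos⟩)
      exact ⟨u, hu.1, fun h' => absurd h' h, hfu⟩
  choose u hu1 hu2 hu3 using key
  refine ⟨p, rfl, hpdeg, u, hu1, hu2, ?_⟩
  intro i
  refine ⟨?_, hu3 i⟩
  -- all denominators nonzero
  have hne : ∀ k : Fin N, a k + u i ≠ 0 := by
    intro k
    rcases le_or_gt (k : ℕ) (i : ℕ) with hk | hk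
    · have hki : k ≤ i := Fin.le_def.2 hk
      have h1 : a i ≤ a k := ha.antitone hki
      have h2 := hu1 i
      intro hc; linarith
    · have h' : (i : ℕ) + 1 < N := by have := k.isLt; omega
      have h2 := hu2 i h'
      have hk' : (⟨(i : ℕ) + 1, h'⟩ : Fin N) ≤ k := Fin.le_def.2 (by simp; omega)
      have h1 : a k ≤ a ⟨(i : ℕ) + 1, h'⟩ := ha.antitone hk'
      intro hc; linarith
  have hne' : ∀ k : Fin N, u i + a k ≠ 0 := fun k => by
    have := hne k; intro hc; apply this; linarith
  have hprod : (∏ m : Fin N, (u i + a m)) ≠ 0 :=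
    Finset.prod_ne_zero_iff.2 (fun m _ => hne' m)
  have hroot : p.eval (u i) = 0 := hu3 i
  rw [hev] at hroot
  have hEq : (∏ m : Fin N, (u i + a m)) =
      ∑ k : Fin N, (x k) ^ 2 * ∏ m ∈ Finset.univ.erase k, (u i + a m) := by linarith
  have hterm : ∀ k : Fin N, (x k) ^ 2 / (a k + u i) =
      ((x k) ^ 2 * ∏ m ∈ Finset.univ.erase k, (u i + a m)) / ∏ m : Fin N, (u i + a m) := by
    intro k
    have hQk : (∏ m ∈ Finset.univ.erase k, (u i + a m)) ≠ 0 :=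
      Finset.prod_ne_zero_iff.2 (fun m _ => hne' m)
    rw [← Finset.mul_prod_erase Finset.univ _ (Finset.mem_univ k),
      mul_div_mul_right _ _ hQk, add_comm (a k) (u i)]
  rw [Finset.sum_congr rfl (fun k _ => hterm k), ← Finset.sum_div, ← hEq, div_self hprod]
end

section
/- Let N ≥ 2 and let α_i^k ≠ 0, β_i^k (i,k = 1,...,N) be real constants such that the polynomial sum_{k=1}^N (α_1^k z_1 + β_1^k)⋯(α_N^k z_N + β_N^k) in variables z_1,...,z_N equals sum_{i=1}^N ρ_i z_i + c (i.e., all monomials of total degree ≥ 2 cancel). Then for any two indices i ≠ j and any k ≠ m, ρ_i (β_i^k/α_i^k - β_i^m/α_i^m) = ρ_j (β_j^k/α_j^k - β_j^m/α_j^m). -/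
open Finset

/-- if `∑ k, ∏ i, (α i k * z i + β i k)` is affine-linear in `z`, i.e. equals
`∑ i, ρ i * z i + c` for all `z`, then the quantities `ρ i * (β i k / α i k - β i m / α i m)`
do not depend on `i`. -/
theorem confocal_parameters_well_defined (N : ℕ) (hN : 2 ≤ N)
    (α β : Fin N → Fin N → ℝ) (ρ : Fin N → ℝ) (c : ℝ)
    (hα : ∀ i k, α i k ≠ 0)
    (hpoly : ∀ z : Fin N → ℝ,
      (∑ k, ∏ i, (α i k * z i + β i k)) = (∑ i, ρ i * z i) + c) :
    ∀ i j k m : Fin N, i ≠ j → k ≠ m →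
      ρ i * (β i k / α i k - β i m / α i m) =
      ρ j * (β j k / α j k - β j m / α j m) := by
  -- key: for every permutation σ, ∑ l, ρ l * (-(β l (σ l)) / α l (σ l)) + c = 0
  have key : ∀ σ : Equiv.Perm (Fin N),
      (∑ l, ρ l * (-(β l (σ l)) / α l (σ l))) + c = 0 := by
    intro σ
    have h := hpoly (fun l => -(β l (σ l)) / α l (σ l))
    rw [← h]
    apply Finset.sum_eq_zero
    intro k _
    apply Finset.prod_eq_zero (Finset.mem_univ (σ.symm k))
    have hσ : σ (σ.symm k) = k := σ.apply_symm_apply k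
    rw [hσ]
    have hne := hα (σ.symm k) k
    field_simp
    ring
  intro i j k m hij hkm
  -- build σ with σ i = k, σ j = m
  set τ : Equiv.Perm (Fin N) := Equiv.swap i k with hτ
  have hτi : τ i = k := Equiv.swap_apply_left i k
  have hτjk : τ j ≠ k := by
    exact fun h => hij (τ.injective (h.trans hτi.symm)).symm
  have hτjk' : τ j ≠ k := hτjk
  set σ : Equiv.Perm (Fin N) := τ.trans (Equiv.swap (τ j) m) with hσdef
  have hσi : σ i = k := by
    simp only [hσdef, Equiv.trans_apply, hτi]
    rw [Equiv.swap_apply_of_ne_of_ne (Ne.symm hτjk) hkm]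
  have hσj : σ j = m := by
    simp only [hσdef, Equiv.trans_apply, Equiv.swap_apply_left]
  set σ' : Equiv.Perm (Fin N) := (Equiv.swap i j).trans σ with hσ'def
  have hσ'i : σ' i = m := by
    simp only [hσ'def, Equiv.trans_apply, Equiv.swap_apply_left, hσj]
  have hσ'j : σ' j = k := by
    simp only [hσ'def, Equiv.trans_apply, Equiv.swap_apply_right, hσi]
  have hσ'l : ∀ l, l ≠ i → l ≠ j → σ' l = σ l := by
    intro l hli hlj
    simp only [hσ'def, Equiv.trans_apply, Equiv.swap_apply_of_ne_of_ne hli hlj]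
  have h1 := key σ
  have h2 := key σ'
  have hsum : ∑ l, (ρ l * (-(β l (σ l)) / α l (σ l))
      - ρ l * (-(β l (σ' l)) / α l (σ' l))) = 0 := by
    rw [Finset.sum_sub_distrib]
    linarith
  have hsub : ({i, j} : Finset (Fin N)) ⊆ Finset.univ := Finset.subset_univ _
  have hzero : ∀ l ∈ Finset.univ, l ∉ ({i, j} : Finset (Fin N)) →
      (ρ l * (-(β l (σ l)) / α l (σ l)) - ρ l * (-(β l (σ' l)) / α l (σ' l))) = 0 := by
    intro l _ hl
    simp only [Finset.mem_insert, Finset.mem_singleton, not_or] at hl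
    rw [hσ'l l hl.1 hl.2]
    ring
  have hpair : ∑ l ∈ ({i, j} : Finset (Fin N)),
      (ρ l * (-(β l (σ l)) / α l (σ l)) - ρ l * (-(β l (σ' l)) / α l (σ' l))) = 0 := by
    rw [Finset.sum_subset hsub hzero]
    exact hsum
  rw [Finset.sum_pair hij] at hpair
  rw [hσi, hσj, hσ'i, hσ'j] at hpair
  have hik := hα i k; have him := hα i m; have hjk := hα j k; have hjm := hα j m
  field_simp at hpair ⊢
  ring_nf at hpair ⊢
  linarith
end

section
/- Let a > b, δ > 0, c_1 ∈ R, and set α = sqrt(a-b), β = sqrt(a-b)·sqrt(1 - e^{-2δ}). Then f(n) = α·e^{δ(n + c_1)} and g(n) = β·Γ_q(-n - c_1 + 3/4)/Γ_q(-n - c_1 + 1/4) with q = e^{-2δ} satisfy f(n)f(n + 1/2) + g(n)g(n + 1/2) = a - b for all n in the domain of definition. -/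
/-!
With `z = -n - c₁ - 1/4` the two products split the constant `a - b` as
`(a - b) q^z + (a - b)(1 - q^z)`: the exponential factors multiply to `e^{-2δz} = q^z`,
while the `Γ_q`-quotients of `g(n)` and `g(n + 1/2)` telescope to
`Γ_q(z + 1)/Γ_q(z) = (1 - q^z)/(1 - q)`, whose denominator is cancelled
by `β² = (a - b)(1 - q)`.
-/

theorem div_mul_div_eq_of_qGamma {q : ℝ} {G : ℝ → ℝ}
    (hG : ∀ z : ℝ, G (z + 1) = (1 - q ^ z) / (1 - q) * G z) {z w : ℝ}
    (hz : G z ≠ 0) (hw : G w ≠ 0) :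
    G (z + 1) / G w * (G w / G z) = (1 - q ^ z) / (1 - q) := by
  rw [div_mul_div_cancel₀ hw, hG, mul_div_assoc, div_self hz, mul_one]

/-- the q-gamma parametrization satisfies
`f(n) f(n + 1/2) + g(n) g(n + 1/2) = a - b`.  Here `G` is a q-gamma function,
i.e. any function satisfying `G(z + 1) = (1 - q^z)/(1 - q) * G z` with `q = e^{-2δ}`. -/
theorem discrete_qgamma_solution (a b δ c₁ : ℝ) (hab : b < a) (hδ : 0 < δ)
    (q : ℝ) (hq : q = Real.exp (-2 * δ))
    (G : ℝ → ℝ) (hG : ∀ z : ℝ, G (z + 1) = (1 - q ^ z) / (1 - q) * G z)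
    (α β : ℝ) (hα : α = Real.sqrt (a - b))
    (hβ : β = Real.sqrt (a - b) * Real.sqrt (1 - Real.exp (-2 * δ)))
    (f g : ℝ → ℝ)
    (hf : ∀ n, f n = α * Real.exp (δ * (n + c₁)))
    (hg : ∀ n, g n = β * G (-n - c₁ + 3 / 4) / G (-n - c₁ + 1 / 4))
    (n : ℝ)
    (h1 : G (-n - c₁ + 1 / 4) ≠ 0) (h2 : G (-n - c₁ - 1 / 4) ≠ 0) :
    f n * f (n + 1 / 2) + g n * g (n + 1 / 2) = a - b := by
  set z := -n - c₁ - 1 / 4 with hz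
  have hq1 : q < 1 := hq ▸ Real.exp_lt_one_iff.mpr (by linarith)
  have hα2 : α * α = a - b := hα ▸ Real.mul_self_sqrt (by linarith)
  have hβ2 : β * β = (a - b) * (1 - q) := by
    rw [hβ, ← hq, mul_mul_mul_comm, Real.mul_self_sqrt (by linarith),
      Real.mul_self_sqrt (by linarith)]
  have hff : f n * f (n + 1 / 2) = (a - b) * q ^ z := by
    rw [hf, hf, hq, ← Real.exp_mul, ← hα2, mul_mul_mul_comm, ← Real.exp_add, hz]
    ring_nf
  have hgg : g n * g (n + 1 / 2) = (a - b) * (1 - q ^ z) := by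
    set w := -n - c₁ + 1 / 4
    rw [hg, hg, show -n - c₁ + 3 / 4 = z + 1 by ring,
      show -(n + 1 / 2) - c₁ + 3 / 4 = w by ring,
      show -(n + 1 / 2) - c₁ + 1 / 4 = z by ring]
    calc _ = β * β * (G (z + 1) / G w * (G w / G z)) := by ring
      _ = (a - b) * (1 - q ^ z) := by
        rw [div_mul_div_eq_of_qGamma hG h2 h1, hβ2]
        field_simp [show 1 - q ≠ 0 by linarith]
  rw [hff, hgg]
  ring
end

section
/- Let a > b > 0 and consider the coordinate system x(s_1,s_2) = sqrt(a-b)·e^{s_1}·e^{s_2}, y(s_1,s_2) = sqrt(a-b)·sqrt(1 - e^{2s_1})·sqrt(e^{2s_2} - 1), with s_1 < 0 < s_2. Then points with s_1 + s_2 constant lie on vertical lines x = const, and points with s_2 - s_1 = η constant lie on the circle centered at (sqrt(a-b)·cosh η, 0) with radius sqrt(a-b)·sinh η. -/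
/-- confocal coordinates diagonally related to vertical lines and
a hyperbolic pencil of circles. -/
theorem diagonals_vertical_lines_and_pencil (a b : ℝ) (hb : 0 < b) (hab : b < a)
    (x y : ℝ → ℝ → ℝ)
    (hx : ∀ s₁ s₂, x s₁ s₂ = Real.sqrt (a - b) * Real.exp s₁ * Real.exp s₂)
    (hy : ∀ s₁ s₂, y s₁ s₂ = Real.sqrt (a - b) *
      (Real.sqrt (1 - Real.exp (2 * s₁)) * Real.sqrt (Real.exp (2 * s₂) - 1))) :
    (∀ s₁ s₂ s₁' s₂' : ℝ, s₁ < 0 → 0 < s₂ → s₁' < 0 → 0 < s₂' →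
      s₁ + s₂ = s₁' + s₂' → x s₁ s₂ = x s₁' s₂') ∧
    (∀ s₁ s₂ : ℝ, s₁ < 0 → 0 < s₂ →
      (x s₁ s₂ - Real.sqrt (a - b) * Real.cosh (s₂ - s₁)) ^ 2 + (y s₁ s₂) ^ 2 =
        (Real.sqrt (a - b) * Real.sinh (s₂ - s₁)) ^ 2) := by
  constructor
  · intro s₁ s₂ s₁' s₂' _ _ _ _ h
    rw [hx, hx, mul_assoc, mul_assoc, ← Real.exp_add, ← Real.exp_add, h]
  · intro s₁ s₂ h1 h2
    rw [hx, hy]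
    set c := Real.sqrt (a - b) with hc
    have hc2 : c ^ 2 = a - b := Real.sq_sqrt (by linarith)
    have h1' : (0:ℝ) ≤ 1 - Real.exp (2 * s₁) := by
      have : Real.exp (2 * s₁) < 1 := Real.exp_lt_one_iff.mpr (by linarith)
      linarith
    have h2' : (0:ℝ) ≤ Real.exp (2 * s₂) - 1 := by
      have : (1:ℝ) < Real.exp (2 * s₂) := by rw [← Real.exp_zero]; exact Real.exp_lt_exp.mpr (by linarith)
      linarith
    have e1 : Real.sqrt (1 - Real.exp (2 * s₁)) ^ 2 = 1 - Real.exp (2 * s₁) :=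
      Real.sq_sqrt h1'
    have e2 : Real.sqrt (Real.exp (2 * s₂) - 1) ^ 2 = Real.exp (2 * s₂) - 1 :=
      Real.sq_sqrt h2'
    have hu2 : Real.exp (2 * s₁) = Real.exp s₁ ^ 2 := by
      rw [two_mul, Real.exp_add, sq]
    have hv2 : Real.exp (2 * s₂) = Real.exp s₂ ^ 2 := by
      rw [two_mul, Real.exp_add, sq]
    have hd : Real.exp (s₂ - s₁) = Real.exp s₂ / Real.exp s₁ := Real.exp_sub _ _
    have hnd : Real.exp (-(s₂ - s₁)) = Real.exp s₁ / Real.exp s₂ := by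
      rw [Real.exp_neg, hd, inv_div]
    rw [Real.cosh_eq, Real.sinh_eq, hd, hnd]
    have hu : Real.exp s₁ ≠ 0 := Real.exp_ne_zero _
    have hv : Real.exp s₂ ≠ 0 := Real.exp_ne_zero _
    have key : (Real.sqrt (1 - Real.exp (2 * s₁)) * Real.sqrt (Real.exp (2 * s₂) - 1)) ^ 2
        = (1 - Real.exp s₁ ^ 2) * (Real.exp s₂ ^ 2 - 1) := by
      rw [mul_pow, e1, e2, hu2, hv2]
    field_simp
    linear_combination (c ^ 2 * (Real.exp s₁ * Real.exp s₂ * 2) ^ 2) * key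
end

section
/- Let u_i : (1/2)Z + 1/4 → R (i = 1,...,N) be sequences, a_k ∈ R constants, and suppose f_i^{(k)} : (1/2)Z → R satisfy f_i^{(k)}(n_i + 1)/f_i^{(k)}(n_i) = (u_i(n_i + 3/4) + a_k)/(u_i(n_i + 1/4) + a_k) for all n_i (all quantities nonzero). Then x_k(n) := prod_{i=1}^N f_i^{(k)}(n_i) satisfies the discrete Euler-Poisson-Darboux equation Δ_iΔ_j x_k = (Δ^{1/2}u_i · Δ_j x_k − Δ^{1/2}u_j · Δ_i x_k)/(u_i − u_j) for all i ≠ j, where Δ_i f(n) = f(n + e_i) − f(n), u_i = u_i(n_i + 1/4), and Δ^{1/2}u_i = u_i(n_i + 3/4) − u_i(n_i + 1/4). -/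
open Finset

/-- A real number lying in the lattice `(1/2)ℤ`. -/
def isHalfInt (t : ℝ) : Prop := ∃ m : ℤ, t = (m : ℝ) / 2

/-- if `f i (n+1) / f i n = (u i (n+3/4) + a)/(u i (n+1/4) + a)` on the
lattice `(1/2)ℤ`, then `x n = ∏ i, f i (n i)` satisfies the discrete
Euler-Poisson-Darboux equation with `γ = 1/2`. -/
theorem discrete_EPD_factorized (N : ℕ) (a : ℝ) (u f : Fin N → ℝ → ℝ)
    (hf0 : ∀ i, ∀ t : ℝ, isHalfInt t → f i t ≠ 0)
    (hden : ∀ i, ∀ t : ℝ, isHalfInt t →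
      u i (t + 1 / 4) + a ≠ 0 ∧ u i (t + 3 / 4) + a ≠ 0)
    (hratio : ∀ i, ∀ t : ℝ, isHalfInt t →
      f i (t + 1) / f i t = (u i (t + 3 / 4) + a) / (u i (t + 1 / 4) + a))
    (x : (Fin N → ℝ) → ℝ) (hx : ∀ n, x n = ∏ i, f i (n i)) :
    ∀ n : Fin N → ℝ, (∀ i, isHalfInt (n i)) → ∀ i j : Fin N, i ≠ j →
      u i (n i + 1 / 4) ≠ u j (n j + 1 / 4) →
      x (Function.update (Function.update n i (n i + 1)) j (n j + 1))
          - x (Function.update n i (n i + 1)) - x (Function.update n j (n j + 1)) + x n =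
        ((u i (n i + 3 / 4) - u i (n i + 1 / 4)) *
            (x (Function.update n j (n j + 1)) - x n)
          - (u j (n j + 3 / 4) - u j (n j + 1 / 4)) *
            (x (Function.update n i (n i + 1)) - x n))
          / (u i (n i + 1 / 4) - u j (n j + 1 / 4)) := by
  intro n hn i j hij huv
  have hni := hn i
  have hnj := hn j
  obtain ⟨hci, hbi⟩ := hden i (n i) hni
  obtain ⟨hcj, hbj⟩ := hden j (n j) hnj
  have hfi := hf0 i (n i) hni
  have hfj := hf0 j (n j) hnj
  have hri : f i (n i + 1) = (u i (n i + 3 / 4) + a) / (u i (n i + 1 / 4) + a) * f i (n i) :=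
    (div_eq_iff hfi).mp (hratio i (n i) hni)
  have hrj : f j (n j + 1) = (u j (n j + 3 / 4) + a) / (u j (n j + 1 / 4) + a) * f j (n j) :=
    (div_eq_iff hfj).mp (hratio j (n j) hnj)
  set g : Fin N → ℝ := fun k => f k (n k) with hg
  -- single updates
  have h1 : x (Function.update n i (n i + 1))
      = f i (n i + 1) * ∏ k ∈ univ.erase i, g k := by
    rw [hx]
    have heq : (fun k => f k (Function.update n i (n i + 1) k))
        = Function.update g i (f i (n i + 1)) := by
      funext k
      by_cases hk : k = i
      · subst hk; simp
      · simp [Function.update_of_ne hk, hg]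
    calc (∏ k, f k (Function.update n i (n i + 1) k))
        = ∏ k, Function.update g i (f i (n i + 1)) k := by rw [heq]
      _ = f i (n i + 1) * ∏ k ∈ univ \ {i}, g k :=
          Finset.prod_update_of_mem (Finset.mem_univ i) g _
      _ = f i (n i + 1) * ∏ k ∈ univ.erase i, g k := by
          rw [Finset.sdiff_singleton_eq_erase]
  have h2 : x (Function.update n j (n j + 1))
      = f j (n j + 1) * ∏ k ∈ univ.erase j, g k := by
    rw [hx]
    have heq : (fun k => f k (Function.update n j (n j + 1) k))
        = Function.update g j (f j (n j + 1)) := by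
      funext k
      by_cases hk : k = j
      · subst hk; simp
      · simp [Function.update_of_ne hk, hg]
    calc (∏ k, f k (Function.update n j (n j + 1) k))
        = ∏ k, Function.update g j (f j (n j + 1)) k := by rw [heq]
      _ = f j (n j + 1) * ∏ k ∈ univ \ {j}, g k :=
          Finset.prod_update_of_mem (Finset.mem_univ j) g _
      _ = f j (n j + 1) * ∏ k ∈ univ.erase j, g k := by
          rw [Finset.sdiff_singleton_eq_erase]
  -- double update
  have h3 : x (Function.update (Function.update n i (n i + 1)) j (n j + 1))
      = f i (n i + 1) * (f j (n j + 1) * ∏ k ∈ (univ.erase j).erase i, g k) := by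
    rw [hx]
    have heq : (fun k => f k (Function.update (Function.update n i (n i + 1)) j (n j + 1) k))
        = Function.update (Function.update g i (f i (n i + 1))) j (f j (n j + 1)) := by
      funext k
      by_cases hk : k = j
      · subst hk; simp [Function.update_of_ne hij.symm]
      · by_cases hk' : k = i
        · subst hk'; simp [Function.update_of_ne hk, Function.update_of_ne hij]
        · simp [Function.update_of_ne hk, Function.update_of_ne hk', hg]
    have hiu : i ∈ (univ : Finset (Fin N)) \ {j} := by
      simp [Finset.mem_sdiff, hij]
    calc (∏ k, f k (Function.update (Function.update n i (n i + 1)) j (n j + 1) k))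
        = ∏ k, Function.update (Function.update g i (f i (n i + 1))) j (f j (n j + 1)) k := by
          rw [heq]
      _ = f j (n j + 1) * ∏ k ∈ univ \ {j}, Function.update g i (f i (n i + 1)) k :=
          Finset.prod_update_of_mem (Finset.mem_univ j) _ _
      _ = f j (n j + 1) * (f i (n i + 1) * ∏ k ∈ (univ \ {j}) \ {i}, g k) := by
          rw [Finset.prod_update_of_mem hiu g _]
      _ = f i (n i + 1) * (f j (n j + 1) * ∏ k ∈ (univ.erase j).erase i, g k) := by
          rw [Finset.sdiff_singleton_eq_erase, Finset.sdiff_singleton_eq_erase]; ring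
  -- decompositions
  have hju : j ∈ ((univ : Finset (Fin N)).erase i) := by
    simp [Finset.mem_erase, hij.symm]
  have hiu' : i ∈ ((univ : Finset (Fin N)).erase j) := by
    simp [Finset.mem_erase, hij]
  have hsplit1 : ∏ k ∈ (univ : Finset (Fin N)).erase i, g k
      = g j * ∏ k ∈ (univ.erase j).erase i, g k := by
    rw [← Finset.mul_prod_erase _ g hju]
    congr 1
    apply Finset.prod_congr _ (fun _ _ => rfl)
    ext k; simp only [Finset.mem_erase]; tauto
  have hsplit2 : ∏ k ∈ (univ : Finset (Fin N)).erase j, g k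
      = g i * ∏ k ∈ (univ.erase j).erase i, g k := by
    rw [← Finset.mul_prod_erase _ g hiu']
  have hxn : x n = g i * (g j * ∏ k ∈ (univ.erase j).erase i, g k) := by
    rw [hx]
    calc (∏ k, f k (n k)) = ∏ k, g k := rfl
      _ = g i * ∏ k ∈ univ.erase i, g k := (Finset.mul_prod_erase _ g (Finset.mem_univ i)).symm
      _ = g i * (g j * ∏ k ∈ (univ.erase j).erase i, g k) := by rw [hsplit1]
  rw [h1, h2, h3, hxn, hsplit1, hsplit2, hri, hrj]
  have hgi : g i = f i (n i) := rfl
  have hgj : g j = f j (n j) := rfl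
  rw [hgi, hgj]
  have hsub : u i (n i + 1 / 4) - u j (n j + 1 / 4) ≠ 0 := sub_ne_zero.mpr huv
  set P := ∏ k ∈ (univ.erase j).erase i, g k with hP
  set A := f i (n i) with hA
  set B := f j (n j) with hB
  set ci := u i (n i + 1 / 4) with hci'
  set bi := u i (n i + 3 / 4) with hbi'
  set cj := u j (n j + 1 / 4) with hcj'
  set bj := u j (n j + 3 / 4) with hbj'
  rw [eq_div_iff hsub]
  field_simp
  ring
end

section
/- Let a > b > 0, 0 < k < 1, k' = sqrt(1−k²), and define for s_1 ∈ [0, 2K(k)], s_2 ∈ [0, K(k)): x(s_1,s_2) = (sqrt(a−b)/k)·sn(s_1,k)·dn(s_2,k)/cn(s_2,k) and y(s_1,s_2) = (k'·sqrt(a−b)/k)·cn(s_1,k)/cn(s_2,k). Then for any constant η, the points (x(s_1, s_1+η), y(s_1, s_1+η)) satisfy the linear equation A x + B y = C with A·sqrt(a−b)/k = −C·sn(η,k) and B·k'·sqrt(a−b)/k = C·cn(η,k); moreover the coefficients satisfy a_0·(A/C)² + b_0·(B/C)² = 1 where a_0 = (a−b)/k² and b_0 = (a−b)(k')²/k²,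 so each such line is tangent to the ellipse x²/a_0 + y²/b_0 = 1. -/
/-!
Since `cn (s + η) > 0` on the diagonal, clearing it from `A x + B y = 1` with
`A = -k sn η / √(a-b)` and `B = k cn η / (k' √(a-b))` leaves exactly the identity
`cn (s + η) = cn s cn η - sn s sn η dn (s + η)`,
while `a₀ A² + b₀ B² = sn² η + cn² η = 1`.
That identity is the cn addition formula plus `sn s sn η` times the dn addition formula, after
cancelling their common denominator `1 - k² sn² s sn² η`. The addition formulas come from
differentiation: with `u + v = c` fixed, numerator over denominator is constant in `u`, by the
derivative equations together with `sn² + cn² = 1` and `dn² + k² sn² = 1`.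
-/

structure JacobiElliptic (k : ℝ) (sn cn dn : ℝ → ℝ) : Prop where
  sn_zero : sn 0 = 0
  cn_zero : cn 0 = 1
  dn_zero : dn 0 = 1
  diff_sn : Differentiable ℝ sn
  diff_cn : Differentiable ℝ cn
  diff_dn : Differentiable ℝ dn
  deriv_sn : ∀ t, deriv sn t = cn t * dn t
  deriv_cn : ∀ t, deriv cn t = -(sn t * dn t)
  deriv_dn : ∀ t, deriv dn t = -(k ^ 2 * sn t * cn t)

theorem mul_eq_mul_of_hasDerivAt {f g f' g' : ℝ → ℝ} (hf : ∀ t, HasDerivAt f (f' t) t)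
    (hg : ∀ t, HasDerivAt g (g' t) t) (hg0 : ∀ t, g t ≠ 0)
    (hfg : ∀ t, f' t * g t = f t * g' t) (s t : ℝ) : f s * g t = f t * g s := by
  have hquot : ∀ t, HasDerivAt (fun t => f t / g t) 0 t := fun t =>
    ((hf t).div (hg t) (hg0 t)).congr_deriv (by rw [hfg, sub_self, zero_div])
  have := is_const_of_deriv_eq_zero (fun t => (hquot t).differentiableAt)
    (fun t => (hquot t).deriv) s t
  rwa [div_eq_div_iff (hg0 s) (hg0 t)] at this

namespace JacobiElliptic

variable {k : ℝ} {sn cn dn : ℝ → ℝ} (hJ : JacobiElliptic k sn cn dn)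
include hJ

theorem hasDerivAt_sn (t : ℝ) : HasDerivAt sn (cn t * dn t) t :=
  hJ.deriv_sn t ▸ (hJ.diff_sn t).hasDerivAt

theorem hasDerivAt_cn (t : ℝ) : HasDerivAt cn (-(sn t * dn t)) t :=
  hJ.deriv_cn t ▸ (hJ.diff_cn t).hasDerivAt

theorem hasDerivAt_dn (t : ℝ) : HasDerivAt dn (-(k ^ 2 * sn t * cn t)) t :=
  hJ.deriv_dn t ▸ (hJ.diff_dn t).hasDerivAt

theorem sn_sq_add_cn_sq (t : ℝ) : sn t ^ 2 + cn t ^ 2 = 1 := by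
  have hderiv : ∀ t, HasDerivAt (fun t => sn t ^ 2 + cn t ^ 2) 0 t := fun t =>
    (((hJ.hasDerivAt_sn t).fun_pow 2).add ((hJ.hasDerivAt_cn t).fun_pow 2)).congr_deriv (by ring)
  simpa [hJ.sn_zero, hJ.cn_zero] using is_const_of_deriv_eq_zero
    (fun t => (hderiv t).differentiableAt) (fun t => (hderiv t).deriv) t 0

theorem dn_sq_add_sq_mul_sn_sq (t : ℝ) : dn t ^ 2 + k ^ 2 * sn t ^ 2 = 1 := by
  have hderiv : ∀ t, HasDerivAt (fun t => dn t ^ 2 + k ^ 2 * sn t ^ 2) 0 t := fun t =>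
    (((hJ.hasDerivAt_dn t).fun_pow 2).add
      (((hJ.hasDerivAt_sn t).fun_pow 2).const_mul _)).congr_deriv (by ring)
  simpa [hJ.sn_zero, hJ.dn_zero] using is_const_of_deriv_eq_zero
    (fun t => (hderiv t).differentiableAt) (fun t => (hderiv t).deriv) t 0

theorem sq_mul_sn_sq_mul_sn_sq_lt_one (hk : k ^ 2 < 1) (u v : ℝ) :
    k ^ 2 * sn u ^ 2 * sn v ^ 2 < 1 := by
  have hu : sn u ^ 2 ≤ 1 := by nlinarith [hJ.sn_sq_add_cn_sq u]
  have hv : sn v ^ 2 ≤ 1 := by nlinarith [hJ.sn_sq_add_cn_sq v]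
  calc k ^ 2 * sn u ^ 2 * sn v ^ 2 ≤ k ^ 2 * 1 * 1 := by gcongr
    _ < 1 := by linarith

theorem cn_add_mul (hk : k ^ 2 < 1) (u v : ℝ) :
    cn (u + v) * (1 - k ^ 2 * sn u ^ 2 * sn v ^ 2) =
      cn u * cn v - sn u * sn v * (dn u * dn v) := by
  set c := u + v
  have hv : v = c - u := by ring
  have key := mul_eq_mul_of_hasDerivAt
    (f := fun t => cn t * cn (c - t) - sn t * sn (c - t) * (dn t * dn (c - t)))
    (g := fun t => 1 - k ^ 2 * sn t ^ 2 * sn (c - t) ^ 2)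
    (fun t => ((hJ.hasDerivAt_cn t).fun_mul ((hJ.hasDerivAt_cn (c - t)).comp_const_sub c t)).sub
      (((hJ.hasDerivAt_sn t).fun_mul ((hJ.hasDerivAt_sn (c - t)).comp_const_sub c t)).fun_mul
        ((hJ.hasDerivAt_dn t).fun_mul ((hJ.hasDerivAt_dn (c - t)).comp_const_sub c t))))
    (fun t => ((((hJ.hasDerivAt_sn t).fun_pow 2).const_mul (k ^ 2)).fun_mul
      (((hJ.hasDerivAt_sn (c - t)).comp_const_sub c t).fun_pow 2)).const_sub 1)
    (fun t => (sub_pos.2 (hJ.sq_mul_sn_sq_mul_sn_sq_lt_one hk t (c - t))).ne')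
    (fun t => by
      linear_combination
        (2 * sn t * dn t * sn (c - t) ^ 2 * cn (c - t) * k ^ 2) * hJ.sn_sq_add_cn_sq t +
        (-(cn t * sn (c - t) * dn (c - t))
          - sn t ^ 2 * cn t * sn (c - t) ^ 3 * dn (c - t) * k ^ 2) * hJ.dn_sq_add_sq_mul_sn_sq t +
        (-(2 * sn t ^ 2 * cn t * sn (c - t) * dn (c - t) * k ^ 2)) * hJ.sn_sq_add_cn_sq (c - t) +
        (sn t * dn t * cn (c - t)
          + sn t ^ 3 * dn t * sn (c - t) ^ 2 * cn (c - t) * k ^ 2) *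
          hJ.dn_sq_add_sq_mul_sn_sq (c - t))
    u 0
  simp only [hJ.sn_zero, hJ.cn_zero, hJ.dn_zero, sub_zero] at key
  rw [hv]
  linear_combination -key

theorem dn_add_mul (hk : k ^ 2 < 1) (u v : ℝ) :
    dn (u + v) * (1 - k ^ 2 * sn u ^ 2 * sn v ^ 2) =
      dn u * dn v - k ^ 2 * (sn u * sn v) * (cn u * cn v) := by
  set c := u + v
  have hv : v = c - u := by ring
  have key := mul_eq_mul_of_hasDerivAt
    (f := fun t => dn t * dn (c - t) - k ^ 2 * (sn t * sn (c - t)) * (cn t * cn (c - t)))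
    (g := fun t => 1 - k ^ 2 * sn t ^ 2 * sn (c - t) ^ 2)
    (fun t => ((hJ.hasDerivAt_dn t).fun_mul ((hJ.hasDerivAt_dn (c - t)).comp_const_sub c t)).sub
      ((((hJ.hasDerivAt_sn t).fun_mul
        ((hJ.hasDerivAt_sn (c - t)).comp_const_sub c t)).const_mul (k ^ 2)).fun_mul
        ((hJ.hasDerivAt_cn t).fun_mul ((hJ.hasDerivAt_cn (c - t)).comp_const_sub c t))))
    (fun t => ((((hJ.hasDerivAt_sn t).fun_pow 2).const_mul (k ^ 2)).fun_mul
      (((hJ.hasDerivAt_sn (c - t)).comp_const_sub c t).fun_pow 2)).const_sub 1)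
    (fun t => (sub_pos.2 (hJ.sq_mul_sn_sq_mul_sn_sq_lt_one hk t (c - t))).ne')
    (fun t => by
      linear_combination
        (-(dn t * sn (c - t) * cn (c - t) * k ^ 2)
          - sn t ^ 2 * dn t * sn (c - t) ^ 3 * cn (c - t) * k ^ 4) * hJ.sn_sq_add_cn_sq t +
        (2 * sn t * cn t * sn (c - t) ^ 2 * dn (c - t) * k ^ 2) * hJ.dn_sq_add_sq_mul_sn_sq t +
        (sn t * cn t * dn (c - t) * k ^ 2
          + sn t ^ 3 * cn t * sn (c - t) ^ 2 * dn (c - t) * k ^ 4) * hJ.sn_sq_add_cn_sq (c - t) +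
        (-(2 * sn t ^ 2 * dn t * sn (c - t) * cn (c - t) * k ^ 2)) *
          hJ.dn_sq_add_sq_mul_sn_sq (c - t))
    u 0
  simp only [hJ.sn_zero, hJ.cn_zero, hJ.dn_zero, sub_zero] at key
  rw [hv]
  linear_combination -key

theorem cn_add_eq_cn_mul_cn_sub_sn_mul_sn_mul_dn_add (hk : k ^ 2 < 1) (u v : ℝ) :
    cn (u + v) = cn u * cn v - sn u * sn v * dn (u + v) := by
  have hden : 1 - k ^ 2 * sn u ^ 2 * sn v ^ 2 ≠ 0 :=
    (sub_pos.2 (hJ.sq_mul_sn_sq_mul_sn_sq_lt_one hk u v)).ne'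
  refine mul_right_cancel₀ hden ?_
  linear_combination hJ.cn_add_mul hk u v + sn u * sn v * hJ.dn_add_mul hk u v

end JacobiElliptic

theorem diagonals_tangent_to_ellipse_general (a b k k' : ℝ) (hab : b < a)
    (hk0 : 0 < k) (hk1 : k < 1) (hk' : k' = Real.sqrt (1 - k ^ 2))
    (sn cn dn : ℝ → ℝ) (hJ : JacobiElliptic k sn cn dn)
    (K : ℝ)
    (hcnpos : ∀ t ∈ Set.Ico (0 : ℝ) K, 0 < cn t)
    (x y : ℝ → ℝ → ℝ)
    (hx : ∀ s₁ s₂, x s₁ s₂ = Real.sqrt (a - b) / k * sn s₁ * (dn s₂ / cn s₂))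
    (hy : ∀ s₁ s₂, y s₁ s₂ = k' * Real.sqrt (a - b) / k * (cn s₁ / cn s₂)) :
    ∀ η : ℝ, ∃ A B C : ℝ, C ≠ 0 ∧
      A * Real.sqrt (a - b) / k = -(C * sn η) ∧
      B * (k' * Real.sqrt (a - b) / k) = C * cn η ∧
      (∀ s₁ ∈ Set.Icc (0 : ℝ) (2 * K), s₁ + η ∈ Set.Ico (0 : ℝ) K →
        A * x s₁ (s₁ + η) + B * y s₁ (s₁ + η) = C) ∧
      (a - b) / k ^ 2 * (A / C) ^ 2 + (a - b) * k' ^ 2 / k ^ 2 * (B / C) ^ 2 = 1 := by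
  intro η
  have hk2 : k ^ 2 < 1 := by nlinarith
  have hsqrt : 0 < Real.sqrt (a - b) := Real.sqrt_pos.2 (sub_pos.2 hab)
  have hk'pos : 0 < k' := hk' ▸ Real.sqrt_pos.2 (sub_pos.2 hk2)
  refine ⟨-(sn η) * k / Real.sqrt (a - b), cn η * k / (k' * Real.sqrt (a - b)), 1,
    one_ne_zero, by field_simp, by field_simp, fun s₁ _ hs => ?_, ?_⟩
  · have hcn := (hcnpos _ hs).ne'
    rw [hx, hy]
    field_simp
    linear_combination -hJ.cn_add_eq_cn_mul_cn_sub_sn_mul_sn_mul_dn_add hk2 s₁ η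
  · field_simp
    linear_combination (a - b) * hJ.sn_sq_add_cn_sq η - Real.sq_sqrt (sub_pos.2 hab).le

/-- for the elliptic parametrization
`x = (√(a-b)/k) sn s₁ dn s₂ / cn s₂`, `y = (k'√(a-b)/k) cn s₁ / cn s₂`,
the diagonal points `s₂ = s₁ + η` lie on a line `A x + B y = C` with
`A √(a-b)/k = -C sn η`, `B k'√(a-b)/k = C cn η`, and
`a₀ (A/C)² + b₀ (B/C)² = 1` with `a₀ = (a-b)/k²`, `b₀ = (a-b)k'²/k²`,
so each such line is tangent to the ellipse `x²/a₀ + y²/b₀ = 1`.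
Here `K` is the first positive zero of `cn` (the complete elliptic integral). -/
theorem diagonals_tangent_to_ellipse (a b k k' : ℝ) (hb : 0 < b) (hab : b < a)
    (hk0 : 0 < k) (hk1 : k < 1) (hk' : k' = Real.sqrt (1 - k ^ 2))
    (sn cn dn : ℝ → ℝ) (hJ : JacobiElliptic k sn cn dn)
    (K : ℝ) (hK0 : 0 < K) (hcnK : cn K = 0)
    (hcnpos : ∀ t ∈ Set.Ico (0 : ℝ) K, 0 < cn t)
    (x y : ℝ → ℝ → ℝ)
    (hx : ∀ s₁ s₂, x s₁ s₂ = Real.sqrt (a - b) / k * sn s₁ * (dn s₂ / cn s₂))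
    (hy : ∀ s₁ s₂, y s₁ s₂ = k' * Real.sqrt (a - b) / k * (cn s₁ / cn s₂)) :
    ∀ η : ℝ, ∃ A B C : ℝ, C ≠ 0 ∧
      A * Real.sqrt (a - b) / k = -(C * sn η) ∧
      B * (k' * Real.sqrt (a - b) / k) = C * cn η ∧
      (∀ s₁ ∈ Set.Icc (0 : ℝ) (2 * K), s₁ + η ∈ Set.Ico (0 : ℝ) K →
        A * x s₁ (s₁ + η) + B * y s₁ (s₁ + η) = C) ∧
      (a - b) / k ^ 2 * (A / C) ^ 2 + (a - b) * k' ^ 2 / k ^ 2 * (B / C) ^ 2 = 1 :=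
  diagonals_tangent_to_ellipse_general a b k k' hab hk0 hk1 hk' sn cn dn hJ K hcnpos x y hx hy
end
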